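/- arXiv:2004.06388 — 2 statements merged into one kernel-verified Lean document; each statement's English description precedes it below -/
import Mathlib

section
/- Let A ∈ ℝ^{m×n} and let A = M − N be a weak proper splitting of the first type of A with A†N ≥ 0. For each λ > 0 let B_λ = M_λ − N_λ be a weak splitting of the second type of B_λ = AᵀA + λI, and suppose that, as λ → 0⁺, N_λB_λ⁻¹ converges entrywise to a matrix L with L ≥ 0 and N_λM_λ⁻¹ converges entrywise to a matrix K with K ≤ M†N. Then ρ(M†N) < 1, and for every real number r such that ρ(M_λ⁻¹N_λ) → r as λ → 0⁺, one has r ≤ ρ(M†N). -/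
/-!
With `T = M†N`, the proper splitting gives `A†N = T + T A†N`; as `T ≥ 0` and `A†N ≥ 0`,
the partial sums of `∑ Tᵏ⁺¹` are bounded by `A†N`, so `Tᵏ → 0` and `ρ(T) < 1`.
For the second claim, `ρ(M_λ⁻¹N_λ) = ρ(N_λM_λ⁻¹)`, and the spectral radius is upper
semicontinuous since `ρ(X) ≤ ‖Xᵖ‖^(1/p)` for every `p`, with equality in the limit
(Gelfand's formula); hence `r ≤ ρ(K)`. The same formula makes `ρ` monotone on nonnegative
matrices, so `ρ(K) ≤ ρ(T)`.
-/

open Matrix Filter Topology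

/-- The spectral radius of a real square matrix: the maximum (supremum) of the
moduli of its complex eigenvalues. -/
noncomputable def specRad {n : Type*} [Fintype n] [DecidableEq n]
    (B : Matrix n n ℝ) : ℝ :=
  sSup ((fun z : ℂ => ‖z‖) '' spectrum ℂ (B.map Complex.ofReal))

/-- Entrywise order on real matrices: `entryLE A B` means every entry of `A` is
at most the corresponding entry of `B`. -/
def entryLE {m n : Type*} (A B : Matrix m n ℝ) : Prop :=
  ∀ i j, A i j ≤ B i j

/-- `X` is the Moore–Penrose inverse of `A`. -/
def IsMoorePenrose {m n : Type*} [Fintype m] [Fintype n]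
    (A : Matrix m n ℝ) (X : Matrix n m ℝ) : Prop :=
  A * X * A = A ∧ X * A * X = X ∧ (A * X)ᵀ = A * X ∧ (X * A)ᵀ = X * A

section EntrywiseOrder

variable {ι κ ν : Type*}

theorem entryLE_of_tendsto {α : Type*} {F : Filter α} [F.NeBot] {X : α → Matrix ι κ ℝ}
    {C K : Matrix ι κ ℝ} (hX : Tendsto X F (𝓝 K)) (hC : ∀ᶠ x in F, entryLE C (X x)) :
    entryLE C K := fun i j =>
  ge_of_tendsto (tendsto_pi_nhds.1 (tendsto_pi_nhds.1 hX i) j) (hC.mono fun _ h => h i j)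

variable [Fintype κ]

theorem entryLE_zero_mul {B : Matrix ι κ ℝ} {C : Matrix κ ν ℝ} (hB : entryLE 0 B)
    (hC : entryLE 0 C) : entryLE 0 (B * C) := fun i j =>
  Finset.sum_nonneg fun k _ => mul_nonneg (hB i k) (hC k j)

theorem entryLE_mul_mul {B B' : Matrix ι κ ℝ} {C C' : Matrix κ ν ℝ} (hB₀ : entryLE 0 B)
    (hC₀ : entryLE 0 C) (hB : entryLE B B') (hC : entryLE C C') :
    entryLE (B * C) (B' * C') := fun i j =>
  Finset.sum_le_sum fun k _ => mul_le_mul (hB i k) (hC k j) (hC₀ k j) ((hB₀ i k).trans (hB i k))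

variable [DecidableEq κ]

theorem entryLE_zero_pow {B : Matrix κ κ ℝ} (hB : entryLE 0 B) (p : ℕ) :
    entryLE 0 (B ^ p) := by
  induction p with
  | zero => intro i j; by_cases h : i = j <;> simp [one_apply, h]
  | succ p ih => rw [pow_succ]; exact entryLE_zero_mul ih hB

theorem entryLE_pow {B C : Matrix κ κ ℝ} (hB₀ : entryLE 0 B) (hBC : entryLE B C) (p : ℕ) :
    entryLE (B ^ p) (C ^ p) := by
  induction p with
  | zero => intro i j; rfl
  | succ p ih =>
    rw [pow_succ, pow_succ]
    exact entryLE_mul_mul (entryLE_zero_pow hB₀ p) hB₀ ih hBC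

theorem tendsto_pow_atTop_nhds_zero_of_eq_add_mul {T S : Matrix κ κ ℝ} (hT : entryLE 0 T)
    (hS : entryLE 0 S) (h : S = T + T * S) : Tendsto (fun k => T ^ k) atTop (𝓝 0) := by
  have hpartial : ∀ k, (∑ q ∈ Finset.range k, T ^ (q + 1)) + T ^ k * S = S := by
    intro k
    induction k with
    | zero => simp
    | succ k ih =>
      rw [Finset.sum_range_succ, add_assoc, pow_succ, mul_assoc, ← mul_add, ← h, ih]
  refine tendsto_pi_nhds.2 fun i => tendsto_pi_nhds.2 fun j => ?_
  have hsum : Summable fun q => (T ^ (q + 1)) i j := by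
    refine summable_of_sum_range_le (c := S i j) (fun q => entryLE_zero_pow hT _ i j) fun k => ?_
    have hk := congrFun (congrFun (hpartial k) i) j
    rw [Matrix.add_apply, Matrix.sum_apply] at hk
    have hrest : 0 ≤ (T ^ k * S) i j := entryLE_zero_mul (entryLE_zero_pow hT k) hS i j
    linarith
  exact (tendsto_add_atTop_iff_nat 1).1 hsum.tendsto_atTop_zero

end EntrywiseOrder

section SpectralRadius

variable {ι : Type*} [Fintype ι] [DecidableEq ι]

theorem Matrix.spectrum_mul_comm {R : Type*} [CommRing R] (P Q : Matrix ι ι R) :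
    spectrum R (P * Q) = spectrum R (Q * P) := by
  ext r
  simp only [mem_spectrum_iff_not_isUnit_eval_charpoly, charpoly_mul_comm]

theorem Matrix.map_ofReal_mul (P Q : Matrix ι ι ℝ) :
    (P * Q).map Complex.ofReal = P.map Complex.ofReal * Q.map Complex.ofReal :=
  map_mul Complex.ofRealHom.mapMatrix P Q

theorem Matrix.map_ofReal_pow (B : Matrix ι ι ℝ) (p : ℕ) :
    (B ^ p).map Complex.ofReal = B.map Complex.ofReal ^ p :=
  map_pow Complex.ofRealHom.mapMatrix B p

theorem specRad_mul_comm (P Q : Matrix ι ι ℝ) : specRad (P * Q) = specRad (Q * P) := by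
  rw [specRad, specRad, map_ofReal_mul, map_ofReal_mul, spectrum_mul_comm]

theorem specRad_of_isEmpty [IsEmpty ι] (B : Matrix ι ι ℝ) : specRad B = 0 := by
  simp [specRad, spectrum.of_subsingleton]

attribute [local instance] Matrix.linftyOpNormedRing Matrix.linftyOpNormedAlgebra

theorem Matrix.norm_map_ofReal (B : Matrix ι ι ℝ) : ‖B.map Complex.ofReal‖ = ‖B‖ := by
  simp [linfty_opNorm_def, Complex.nnnorm_real]

theorem norm_le_norm_of_entryLE {B C : Matrix ι ι ℝ} (hB₀ : entryLE 0 B) (hBC : entryLE B C) :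
    ‖B‖ ≤ ‖C‖ := by
  simp only [linfty_opNorm_def, NNReal.coe_le_coe]
  refine Finset.sup_mono_fun fun i _ => Finset.sum_le_sum fun j _ => ?_
  rw [← NNReal.coe_le_coe, coe_nnnorm, coe_nnnorm, Real.norm_of_nonneg (hB₀ i j),
    Real.norm_of_nonneg ((hB₀ i j).trans (hBC i j))]
  exact hBC i j

theorem spectralRadius_map_ofReal (B : Matrix ι ι ℝ) :
    spectralRadius ℂ (B.map Complex.ofReal) = ENNReal.ofReal (specRad B) := by
  rcases isEmpty_or_nonempty ι with hι | hι
  · simp [specRad_of_isEmpty]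
  obtain ⟨k, hk, hkr⟩ := spectrum.exists_nnnorm_eq_spectralRadius (B.map Complex.ofReal)
  have hmax : specRad B = ‖k‖ := by
    refine IsGreatest.csSup_eq ⟨⟨k, hk, rfl⟩, ?_⟩
    rintro _ ⟨μ, hμ, rfl⟩
    have hμk : (‖μ‖₊ : ENNReal) ≤ ‖k‖₊ := hkr ▸ le_iSup₂ (α := ENNReal) μ hμ
    exact_mod_cast hμk
  rw [← hkr, hmax, ofReal_norm, enorm_eq_nnnorm]

theorem specRad_le_norm_pow_rpow (B : Matrix ι ι ℝ) {p : ℕ} (hp : 0 < p) :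
    specRad B ≤ ‖B ^ p‖ ^ (1 / p : ℝ) := by
  rcases isEmpty_or_nonempty ι with hι | hι
  · rw [specRad_of_isEmpty]; positivity
  refine Real.sSup_le ?_ (by positivity)
  rintro _ ⟨μ, hμ, rfl⟩
  have hμp : μ ^ p ∈ spectrum ℂ ((B ^ p).map Complex.ofReal) := by
    rw [map_ofReal_pow]
    exact spectrum.pow_mem_pow _ p hμ
  have hle : ‖μ‖ ^ p ≤ ‖B ^ p‖ := by
    simpa [norm_map_ofReal] using spectrum.norm_le_norm_of_mem hμp
  calc ‖μ‖ = (‖μ‖ ^ p) ^ (1 / p : ℝ) := by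
        rw [← Real.rpow_natCast, ← Real.rpow_mul (norm_nonneg μ),
          mul_one_div_cancel (by positivity), Real.rpow_one]
    _ ≤ ‖B ^ p‖ ^ (1 / p : ℝ) := by gcongr

theorem tendsto_norm_pow_rpow_specRad (B : Matrix ι ι ℝ) :
    Tendsto (fun p : ℕ => ‖B ^ p‖ ^ (1 / p : ℝ)) atTop (𝓝 (specRad B)) := by
  have hgelfand :=
    spectrum.pow_norm_pow_one_div_tendsto_nhds_spectralRadius (B.map Complex.ofReal)
  rw [spectralRadius_map_ofReal] at hgelfand
  simp only [← map_ofReal_pow, norm_map_ofReal] at hgelfand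
  have hreal := (ENNReal.tendsto_toReal ENNReal.ofReal_ne_top).comp hgelfand
  have hnonneg : 0 ≤ specRad B := Real.sSup_nonneg fun _ ⟨μ, _, hμ⟩ => hμ ▸ norm_nonneg μ
  simpa [Function.comp_def, ENNReal.toReal_ofReal, hnonneg, Real.rpow_nonneg] using hreal

theorem specRad_lt_one_of_tendsto_pow {B : Matrix ι ι ℝ}
    (h : Tendsto (fun k => B ^ k) atTop (𝓝 0)) : specRad B < 1 := by
  have hnorm : ∀ᶠ k in atTop, ‖B ^ k‖ < 1 :=
    h.norm.eventually_lt_const (by rw [norm_zero]; exact one_pos)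
  obtain ⟨p, hp, hlt⟩ := ((eventually_gt_atTop 0).and hnorm).exists
  calc specRad B ≤ ‖B ^ p‖ ^ (1 / p : ℝ) := specRad_le_norm_pow_rpow B hp
    _ < 1 := Real.rpow_lt_one (norm_nonneg _) hlt (by positivity)

theorem specRad_mono {B C : Matrix ι ι ℝ} (hB₀ : entryLE 0 B) (hBC : entryLE B C) :
    specRad B ≤ specRad C :=
  le_of_tendsto_of_tendsto' (tendsto_norm_pow_rpow_specRad B) (tendsto_norm_pow_rpow_specRad C)
    fun p => by
      gcongr
      exact norm_le_norm_of_entryLE (entryLE_zero_pow hB₀ p) (entryLE_pow hB₀ hBC p)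

theorem le_specRad_of_tendsto {α : Type*} {F : Filter α} [F.NeBot] {X : α → Matrix ι ι ℝ}
    {K : Matrix ι ι ℝ} {r : ℝ} (hX : Tendsto X F (𝓝 K))
    (hr : Tendsto (fun x => specRad (X x)) F (𝓝 r)) : r ≤ specRad K := by
  refine ge_of_tendsto (tendsto_norm_pow_rpow_specRad K) ?_
  filter_upwards [eventually_gt_atTop 0] with p hp
  have hXp : Tendsto (fun x => ‖X x ^ p‖ ^ (1 / p : ℝ)) F (𝓝 (‖K ^ p‖ ^ (1 / p : ℝ))) :=
    (hX.pow p).norm.rpow_const (Or.inr (by positivity))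
  exact le_of_tendsto_of_tendsto' hr hXp fun x => specRad_le_norm_pow_rpow (X x) hp

end SpectralRadius

namespace IsMoorePenrose

variable {m n k : Type*} [Fintype m] [Fintype n]

theorem mul_mul_eq_of_range_le [Fintype k] {M : Matrix m n ℝ} {Y : Matrix n m ℝ}
    (hM : IsMoorePenrose M Y) {A : Matrix m k ℝ}
    (h : LinearMap.range A.mulVecLin ≤ LinearMap.range M.mulVecLin) :
    M * Y * A = A := by
  refine ext_iff_mulVec.2 fun v => ?_
  obtain ⟨w, hw⟩ : A *ᵥ v ∈ LinearMap.range M.mulVecLin := h ⟨v, rfl⟩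
  rw [mulVecLin_apply] at hw
  rw [← mulVec_mulVec, ← hw, mulVec_mulVec, hM.1]

theorem mul_mul_eq_of_ker_le {M : Matrix m n ℝ} {Y : Matrix n m ℝ} (hM : IsMoorePenrose M Y)
    {A : Matrix k n ℝ} (h : LinearMap.ker M.mulVecLin ≤ LinearMap.ker A.mulVecLin) :
    A * (Y * M) = A := by
  refine ext_iff_mulVec.2 fun v => ?_
  have hv : v - (Y * M) *ᵥ v ∈ LinearMap.ker M.mulVecLin := by
    rw [LinearMap.mem_ker, mulVecLin_apply, mulVec_sub, mulVec_mulVec, ← Matrix.mul_assoc, hM.1,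
      sub_self]
  have hAv := h hv
  rw [LinearMap.mem_ker, mulVecLin_apply, mulVec_sub, sub_eq_zero] at hAv
  rw [← mulVec_mulVec, hAv]

variable {A M : Matrix m n ℝ} {X Y : Matrix n m ℝ}

theorem mul_eq_mul_of_range_eq (hA : IsMoorePenrose A X) (hM : IsMoorePenrose M Y)
    (h : LinearMap.range M.mulVecLin = LinearMap.range A.mulVecLin) : M * Y = A * X := by
  have hMA : M * Y * (A * X) = A * X := by
    rw [← Matrix.mul_assoc, hM.mul_mul_eq_of_range_le h.ge]
  have hAM : A * X * (M * Y) = M * Y := by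
    rw [← Matrix.mul_assoc, hA.mul_mul_eq_of_range_le h.le]
  calc M * Y = (A * X * (M * Y))ᵀ := by rw [hAM, hM.2.2.1]
    _ = M * Y * (A * X) := by rw [transpose_mul, hM.2.2.1, hA.2.2.1]
    _ = A * X := hMA

theorem mul_eq_mul_of_ker_eq (hA : IsMoorePenrose A X) (hM : IsMoorePenrose M Y)
    (h : LinearMap.ker M.mulVecLin = LinearMap.ker A.mulVecLin) : Y * M = X * A := by
  have hMA : Y * M * (X * A) = Y * M := by
    rw [Matrix.mul_assoc, hA.mul_mul_eq_of_ker_le h.ge]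
  have hAM : X * A * (Y * M) = X * A := by
    rw [Matrix.mul_assoc, hM.mul_mul_eq_of_ker_le h.le]
  calc Y * M = Y * M * (X * A) := hMA.symm
    _ = (X * A * (Y * M))ᵀ := by rw [transpose_mul, hA.2.2.2, hM.2.2.2]
    _ = X * A := by rw [hAM, hA.2.2.2]

theorem mul_eq_add_mul_mul (hA : IsMoorePenrose A X) (hM : IsMoorePenrose M Y) {N : Matrix m n ℝ}
    (hsplit : A = M - N) (hrange : LinearMap.range M.mulVecLin = LinearMap.range A.mulVecLin)
    (hker : LinearMap.ker M.mulVecLin = LinearMap.ker A.mulVecLin) :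
    X * N = Y * N + Y * N * (X * N) := by
  have hYMX : Y * M * X = X := by rw [mul_eq_mul_of_ker_eq hA hM hker, hA.2.1]
  have hT : Y * N = X * N - Y * N * (X * N) := calc
    Y * N = Y * (M * Y) * N := by rw [← Matrix.mul_assoc, hM.2.1]
    _ = Y * A * (X * N) := by
        rw [mul_eq_mul_of_range_eq hA hM hrange]; simp only [Matrix.mul_assoc]
    _ = X * N - Y * N * (X * N) := by
        rw [hsplit, Matrix.mul_sub, Matrix.sub_mul, ← Matrix.mul_assoc (Y * M), hYMX]
  exact sub_eq_iff_eq_add.1 hT.symm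

end IsMoorePenrose

theorem stmt5_general {m n : ℕ} (A M N : Matrix (Fin m) (Fin n) ℝ)
    (Adag Mdag : Matrix (Fin n) (Fin m) ℝ)
    (hAdag : IsMoorePenrose A Adag) (hMdag : IsMoorePenrose M Mdag)
    -- `A = M − N` is a weak proper splitting of the first type with `A†N ≥ 0`
    (hsplit : A = M - N)
    (hrange : LinearMap.range M.mulVecLin = LinearMap.range A.mulVecLin)
    (hker : LinearMap.ker M.mulVecLin = LinearMap.ker A.mulVecLin)
    (hweak : entryLE 0 (Mdag * N))
    (hAN : entryLE 0 (Adag * N))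
    -- for each `λ > 0`, `B_λ = M_λ − N_λ` is a weak splitting of the second type
    (Mlam Nlam : ℝ → Matrix (Fin n) (Fin n) ℝ)
    (hweakl : ∀ l : ℝ, 0 < l → entryLE 0 (Nlam l * (Mlam l)⁻¹))
    -- `N_λ M_λ⁻¹ → K ≤ M†N` entrywise as `λ → 0⁺`
    (K : Matrix (Fin n) (Fin n) ℝ)
    (hKtend : Tendsto (fun l : ℝ => Nlam l * (Mlam l)⁻¹) (𝓝[>] 0) (𝓝 K))
    (hK : entryLE K (Mdag * N)) :
    specRad (Mdag * N) < 1 ∧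
      ∀ r : ℝ, Tendsto (fun l : ℝ => specRad ((Mlam l)⁻¹ * Nlam l)) (𝓝[>] 0) (𝓝 r) →
        r ≤ specRad (Mdag * N) := by
  have hneumann : Adag * N = Mdag * N + Mdag * N * (Adag * N) :=
    hAdag.mul_eq_add_mul_mul hMdag hsplit hrange hker
  refine ⟨specRad_lt_one_of_tendsto_pow
    (tendsto_pow_atTop_nhds_zero_of_eq_add_mul hweak hAN hneumann), fun r hr => ?_⟩
  have hK₀ : entryLE 0 K :=
    entryLE_of_tendsto hKtend (eventually_mem_nhdsWithin.mono hweakl)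
  have hr' : Tendsto (fun l => specRad (Nlam l * (Mlam l)⁻¹)) (𝓝[>] 0) (𝓝 r) := by
    simpa only [specRad_mul_comm] using hr
  exact (le_specRad_of_tendsto hKtend hr').trans (specRad_mono hK₀ hK)

theorem stmt5 {m n : ℕ} (A M N : Matrix (Fin m) (Fin n) ℝ)
    (Adag Mdag : Matrix (Fin n) (Fin m) ℝ)
    (hAdag : IsMoorePenrose A Adag) (hMdag : IsMoorePenrose M Mdag)
    -- `A = M − N` is a weak proper splitting of the first type with `A†N ≥ 0`
    (hsplit : A = M - N)
    (hrange : LinearMap.range M.mulVecLin = LinearMap.range A.mulVecLin)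
    (hker : LinearMap.ker M.mulVecLin = LinearMap.ker A.mulVecLin)
    (hweak : entryLE 0 (Mdag * N))
    (hAN : entryLE 0 (Adag * N))
    -- for each `λ > 0`, `B_λ = M_λ − N_λ` is a weak splitting of the second type
    (Mlam Nlam : ℝ → Matrix (Fin n) (Fin n) ℝ)
    (hBsplit : ∀ l : ℝ, 0 < l →
      Aᵀ * A + l • (1 : Matrix (Fin n) (Fin n) ℝ) = Mlam l - Nlam l)
    (hMinv : ∀ l : ℝ, 0 < l → IsUnit (Mlam l).det)
    (hweakl : ∀ l : ℝ, 0 < l → entryLE 0 (Nlam l * (Mlam l)⁻¹))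
    -- `N_λ B_λ⁻¹ → L ≥ 0` entrywise as `λ → 0⁺`
    (L : Matrix (Fin n) (Fin n) ℝ)
    (hLtend : Tendsto
      (fun l : ℝ => Nlam l * (Aᵀ * A + l • (1 : Matrix (Fin n) (Fin n) ℝ))⁻¹)
      (𝓝[>] 0) (𝓝 L))
    (hL0 : entryLE 0 L)
    -- `N_λ M_λ⁻¹ → K ≤ M†N` entrywise as `λ → 0⁺`
    (K : Matrix (Fin n) (Fin n) ℝ)
    (hKtend : Tendsto (fun l : ℝ => Nlam l * (Mlam l)⁻¹) (𝓝[>] 0) (𝓝 K))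
    (hK : entryLE K (Mdag * N)) :
    specRad (Mdag * N) < 1 ∧
      ∀ r : ℝ, Tendsto (fun l : ℝ => specRad ((Mlam l)⁻¹ * Nlam l)) (𝓝[>] 0) (𝓝 r) →
        r ≤ specRad (Mdag * N) :=
  stmt5_general A M N Adag Mdag hAdag hMdag hsplit hrange hker hweak hAN Mlam Nlam hweakl K hKtend
    hK
end

section
/- Let A = P₁ − R₁ + S₁ = P₂ − R₂ + S₂ be two convergent double weak splittings of type II of a symmetric monotone (i.e. A⁻¹ ≥ 0) nonsingular matrix A ∈ ℝ^{n×n}, with iteration matrices W̃₁ and W̃₂ respectively. If P₁ ≤ P₂ and S₂ ≤ S₁, then ρ(W̃₁) ≤ ρ(W̃₂) < 1. -/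
open Matrix Filter Topology

/-- Iteration matrix of a double weak splitting of type II:
`W̃ = [[(RP⁻¹)ᵀ, −(SP⁻¹)ᵀ],[I, 0]]`. -/
noncomputable def itMatII {n : Type*} [Fintype n] [DecidableEq n]
    (P R S : Matrix n n ℝ) : Matrix (n ⊕ n) (n ⊕ n) ℝ :=
  Matrix.fromBlocks ((R * P⁻¹)ᵀ) (-((S * P⁻¹)ᵀ)) 1 0

/-- Iteration matrix of a double weak splitting of type I:
`Ŵ = [[P⁻¹R, −P⁻¹S],[I, 0]]`. -/
noncomputable def itMatI {n : Type*} [Fintype n] [DecidableEq n]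
    (P R S : Matrix n n ℝ) : Matrix (n ⊕ n) (n ⊕ n) ℝ :=
  Matrix.fromBlocks (P⁻¹ * R) (-(P⁻¹ * S)) 1 0

/-!
For `G, H ≥ 0`, `W̃ = [[Gᵀ, Hᵀ], [I, 0]]` is the transpose of the nonnegative companion matrix
`C = [[G, I], [H, 0]]` of the quadratic pencil `X(t) = t² I - t G - H`, and for `t > 0` one has
`ρ(C) < t` as soon as `X(t) U ≥ I` for some `U ≥ 0`; conversely `ρ(C) < t` gives `X(t)⁻¹ ≥ 0`
(Neumann series). With `G = R P⁻¹`, `H = -S P⁻¹` one has `X(t) P = t² P - t R + S`, so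
`X(1) = A P⁻¹`.

Let `ρ(W̃₂) < t ≤ 1`, `Z₂ = X₂(t)⁻¹ ≥ 0` and `Z₁ = X₁(1)⁻¹ = P₁ A⁻¹ ≥ 0`. Since
`X₂(1) Z₂ = t⁻¹ I + (1 - t)(I + t⁻¹ H₂) Z₂ ≥ 0`, the matrix `U = Z₁ X₂(1) Z₂ = P₁ P₂⁻¹ Z₂` is
nonnegative, `P₂⁻¹ Z₂ = A⁻¹ X₂(1) Z₂ ≥ 0` by monotonicity of `A`, and
`X₁(t) U = I + (1 - t) (t (P₂ - P₁) + S₁ - S₂) P₂⁻¹ Z₂ ≥ I`. Hence `ρ(W̃₁) < t`.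
-/

lemma entryLE_zero_one {m : Type*} [DecidableEq m] : entryLE 0 (1 : Matrix m m ℝ) := fun i j => by
  rw [Matrix.zero_apply, one_apply]
  split_ifs <;> norm_num

namespace entryLE

variable {l m n : Type*}

lemma add_nonneg {A B : Matrix m n ℝ} (hA : entryLE 0 A) (hB : entryLE 0 B) :
    entryLE 0 (A + B) :=
  fun i j => by simpa using _root_.add_nonneg (hA i j) (hB i j)

lemma le_add_of_nonneg_right {A B : Matrix m n ℝ} (hB : entryLE 0 B) : entryLE A (A + B) :=
  fun i j => by simpa using hB i j

lemma smul_nonneg {c : ℝ} (hc : 0 ≤ c) {A : Matrix m n ℝ} (hA : entryLE 0 A) :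
    entryLE 0 (c • A) :=
  fun i j => by simpa using mul_nonneg hc (by simpa using hA i j)

lemma mul_nonneg [Fintype m] {A : Matrix l m ℝ} {B : Matrix m n ℝ} (hA : entryLE 0 A)
    (hB : entryLE 0 B) : entryLE 0 (A * B) :=
  fun i j => by
    simpa [mul_apply] using
      Finset.sum_nonneg fun k _ => _root_.mul_nonneg (by simpa using hA i k) (by simpa using hB k j)

lemma fromBlocks {o p : Type*} {A A' : Matrix m n ℝ} {B B' : Matrix m o ℝ}
    {C C' : Matrix p n ℝ} {D D' : Matrix p o ℝ} (hA : entryLE A A') (hB : entryLE B B')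
    (hC : entryLE C C') (hD : entryLE D D') :
    entryLE (Matrix.fromBlocks A B C D) (Matrix.fromBlocks A' B' C' D') := by
  rintro (i | i) (j | j)
  exacts [hA i j, hB i j, hC i j, hD i j]

lemma vecMul_le_vecMul [Fintype m] {A B : Matrix m n ℝ} (h : entryLE A B) {v : m → ℝ}
    (hv : 0 ≤ v) : v ᵥ* A ≤ v ᵥ* B :=
  fun j => Finset.sum_le_sum fun i _ => mul_le_mul_of_nonneg_left (h i j) (hv i)

lemma vecMul_mono [Fintype m] {A : Matrix m n ℝ} (hA : entryLE 0 A) {v w : m → ℝ}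
    (hvw : v ≤ w) : v ᵥ* A ≤ w ᵥ* A :=
  fun j => Finset.sum_le_sum fun i _ =>
    mul_le_mul_of_nonneg_right (hvw i) (by simpa using hA i j)

lemma pow_nonneg [Fintype m] [DecidableEq m] {A : Matrix m m ℝ} (hA : entryLE 0 A) (k : ℕ) :
    entryLE 0 (A ^ k) := by
  induction k with
  | zero => rw [pow_zero]; exact entryLE_zero_one
  | succ k ih => rw [pow_succ]; exact ih.mul_nonneg hA

lemma sum_nonneg {ι : Type*} {s : Finset ι} {A : ι → Matrix m n ℝ}
    (hA : ∀ k ∈ s, entryLE 0 (A k)) : entryLE 0 (∑ k ∈ s, A k) :=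
  fun i j => by
    simpa [Matrix.sum_apply] using Finset.sum_nonneg fun k hk => by simpa using hA k hk i j

end entryLE

lemma entryLE_of_tendsto_s8 {m n ι : Type*} {l : Filter ι} [l.NeBot] {f : ι → Matrix m n ℝ}
    {A B : Matrix m n ℝ} (hf : Tendsto f l (𝓝 B)) (h : ∀ᶠ k in l, entryLE A (f k)) :
    entryLE A B := fun i j =>
  ge_of_tendsto (((continuous_id.matrix_elem i j).tendsto B).comp hf) (h.mono fun _ hk => hk i j)

section SpectralRadius

variable {m : Type*} [Fintype m] [DecidableEq m]

lemma specRad_nonneg (B : Matrix m m ℝ) : 0 ≤ specRad B :=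
  Real.sSup_nonneg <| by rintro _ ⟨z, -, rfl⟩; exact norm_nonneg z

lemma norm_le_specRad (B : Matrix m m ℝ) {z : ℂ} (hz : z ∈ spectrum ℂ (B.map Complex.ofReal)) :
    ‖z‖ ≤ specRad B :=
  le_csSup ((finite_spectrum _).image _).bddAbove ⟨z, hz, rfl⟩

lemma specRad_lt_of_forall_norm_lt {B : Matrix m m ℝ} {t : ℝ} (ht : 0 < t)
    (h : ∀ z ∈ spectrum ℂ (B.map Complex.ofReal), ‖z‖ < t) : specRad B < t := by
  rcases ((fun z : ℂ => ‖z‖) '' spectrum ℂ (B.map Complex.ofReal)).eq_empty_or_nonempty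
    with hempty | hne
  · rwa [specRad, hempty, Real.sSup_empty]
  · rw [specRad, ((finite_spectrum _).image _).csSup_lt_iff hne]
    rintro _ ⟨z, hz, rfl⟩
    exact h z hz

lemma specRad_transpose (B : Matrix m m ℝ) : specRad Bᵀ = specRad B := by
  have : spectrum ℂ (Bᵀ.map Complex.ofReal) = spectrum ℂ (B.map Complex.ofReal) := by
    ext z
    rw [transpose_map, mem_spectrum_iff_isRoot_charpoly, mem_spectrum_iff_isRoot_charpoly,
      charpoly_transpose]
  rw [specRad, specRad, this]

lemma ofReal_mem_spectrum_map {B : Matrix m m ℝ} {t : ℝ} (ht : t ∈ spectrum ℝ B) :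
    (t : ℂ) ∈ spectrum ℂ (B.map Complex.ofReal) := by
  rw [mem_spectrum_iff_isRoot_charpoly] at ht ⊢
  exact charpoly_map B Complex.ofRealHom ▸ ht.map

lemma exists_vecMul_eq_smul_of_mem_spectrum {K : Type*} [Field K] {M : Matrix m m K} {z : K}
    (hz : z ∈ spectrum K M) : ∃ v, v ≠ 0 ∧ v ᵥ* M = z • v := by
  rw [mem_spectrum_iff_isRoot_charpoly, Polynomial.IsRoot, eval_charpoly,
    ← exists_vecMul_eq_zero_iff] at hz
  obtain ⟨v, hv, hvz⟩ := hz
  refine ⟨v, hv, ?_⟩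
  rw [vecMul_sub, sub_eq_zero] at hvz
  ext i
  rw [← hvz, scalar_apply, vecMul_diagonal]
  simp [mul_comm]

end SpectralRadius

section Gelfand

variable {m : Type*} [Fintype m] [DecidableEq m]

attribute [local instance] Matrix.linftyOpNormedRing Matrix.linftyOpNormedAlgebra

lemma tendsto_inv_smul_pow_of_specRad_lt {B : Matrix m m ℝ} {t : ℝ} (ht : 0 < t)
    (h : specRad B < t) : Tendsto (fun k : ℕ => (t⁻¹ • B) ^ k) atTop (𝓝 0) := by
  set M := B.map Complex.ofReal
  obtain ⟨s, hBs, hst⟩ := exists_between h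
  have hs : 0 < s := (specRad_nonneg B).trans_lt hBs
  have hρ : spectralRadius ℂ M < ENNReal.ofReal s := by
    refine lt_of_le_of_lt (iSup₂_le fun z hz => ?_) ((ENNReal.ofReal_lt_ofReal_iff hs).2 hBs)
    rw [← enorm_eq_nnnorm, ← ofReal_norm]
    exact ENNReal.ofReal_le_ofReal (norm_le_specRad B hz)
  have hM : ∀ᶠ k : ℕ in atTop, ‖M ^ k‖ ≤ s ^ k := by
    filter_upwards [(spectrum.pow_norm_pow_one_div_tendsto_nhds_spectralRadius M).eventually_lt_const
      hρ, eventually_gt_atTop 0] with k hk hk0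
    rw [ENNReal.ofReal_lt_ofReal_iff hs, one_div,
      Real.rpow_inv_lt_iff_of_pos (norm_nonneg _) hs.le (by positivity), Real.rpow_natCast] at hk
    exact hk.le
  have hscaled : Tendsto (fun k : ℕ => ((t : ℂ)⁻¹ • M) ^ k) atTop (𝓝 0) := by
    -- the `ℓ∞`-operator norm induces, definitionally, the product topology on matrices
    refine tendsto_zero_iff_norm_tendsto_zero.mpr ?_
    refine squeeze_zero_norm' ?_ (tendsto_pow_atTop_nhds_zero_of_lt_one
      (div_nonneg hs.le ht.le) ((div_lt_one ht).2 hst))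
    filter_upwards [hM] with k hk
    rw [norm_norm, smul_pow, norm_smul, norm_pow, norm_inv, Complex.norm_real,
      Real.norm_of_nonneg ht.le, div_pow, div_eq_inv_mul, inv_pow]
    exact mul_le_mul_of_nonneg_left hk (by positivity)
  have hmap : ∀ k : ℕ, (t⁻¹ • B) ^ k = (((t : ℂ)⁻¹ • M) ^ k).map Complex.re := fun k => by
    have : (t : ℂ)⁻¹ • M = Complex.ofRealHom.mapMatrix (t⁻¹ • B) := by
      ext i j; simp [M]
    rw [this, ← map_pow]
    ext i j; simp
  simpa [Function.comp_def, ← hmap] using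
    ((continuous_id.matrix_map Complex.continuous_re).tendsto 0).comp hscaled

end Gelfand

section NonnegativeMatrices

variable {m : Type*} [Fintype m] [DecidableEq m]

lemma isUnit_smul_one_sub_of_specRad_lt {B : Matrix m m ℝ} {t : ℝ} (h : specRad B < t) :
    IsUnit (t • (1 : Matrix m m ℝ) - B) := by
  rw [← Algebra.algebraMap_eq_smul_one, ← spectrum.notMem_iff]
  intro ht
  have := norm_le_specRad B (ofReal_mem_spectrum_map ht)
  rw [Complex.norm_real, Real.norm_eq_abs] at this
  linarith [le_abs_self t]

lemma exists_nonneg_mul_eq_one_of_specRad_lt {B : Matrix m m ℝ} {t : ℝ} (hB : entryLE 0 B)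
    (ht : 0 < t) (h : specRad B < t) :
    ∃ Z, entryLE 0 Z ∧ (t • (1 : Matrix m m ℝ) - B) * Z = 1 := by
  obtain ⟨u, hu⟩ := isUnit_smul_one_sub_of_specRad_lt h
  set V : Matrix m m ℝ := ↑u⁻¹
  set C := t⁻¹ • B with hCdef
  have hC : t • (1 - C) = t • (1 : Matrix m m ℝ) - B := by
    rw [smul_sub, hCdef, smul_smul, mul_inv_cancel₀ ht.ne', one_smul]
  have hsum : ∀ K : ℕ, ∑ k ∈ Finset.range K, C ^ k = t • (V * (1 - C ^ K)) := fun K =>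
    calc ∑ k ∈ Finset.range K, C ^ k = (V * ↑u) * ∑ k ∈ Finset.range K, C ^ k := by
          rw [Units.inv_mul, Matrix.one_mul]
      _ = V * (t • (1 - C)) * ∑ k ∈ Finset.range K, C ^ k := by rw [hu, hC]
      _ = t • (V * ((1 - C) * ∑ k ∈ Finset.range K, C ^ k)) := by
          rw [Matrix.mul_smul, Matrix.smul_mul, Matrix.mul_assoc]
      _ = t • (V * (1 - C ^ K)) := by rw [mul_neg_geom_sum]
  have hlim : Tendsto (fun K : ℕ => t • (V * (1 - C ^ K))) atTop (𝓝 (t • (V * (1 - 0)))) :=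
    ((tendsto_const_nhds.sub (tendsto_inv_smul_pow_of_specRad_lt ht h)).const_mul _).const_smul t
  rw [sub_zero, Matrix.mul_one] at hlim
  have hC0 : entryLE 0 C := entryLE.smul_nonneg (inv_nonneg.2 ht.le) hB
  have hpos : entryLE 0 (t • V) := entryLE_of_tendsto_s8 hlim <| Eventually.of_forall fun K =>
    hsum K ▸ entryLE.sum_nonneg fun k _ => hC0.pow_nonneg k
  refine ⟨V, ?_, by rw [← hu, Units.mul_inv]⟩
  simpa [smul_smul, inv_mul_cancel₀ ht.ne'] using entryLE.smul_nonneg (inv_nonneg.2 ht.le) hpos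

/-- If `v B = z v` with `v ≠ 0`, then `w = |v|` satisfies `w B ≥ |z| w`, so
`w ≤ w (t - B) Y ≤ (t - |z|) w Y`, which forces `|z| < t`. -/
lemma specRad_lt_of_one_le_mul {B Y : Matrix m m ℝ} {t : ℝ} (hB : entryLE 0 B)
    (hY : entryLE 0 Y) (ht : 0 < t) (h : entryLE 1 ((t • (1 : Matrix m m ℝ) - B) * Y)) :
    specRad B < t := by
  refine specRad_lt_of_forall_norm_lt ht fun z hz => ?_
  obtain ⟨v, hv, hvB⟩ := exists_vecMul_eq_smul_of_mem_spectrum hz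
  set w : m → ℝ := fun i => ‖v i‖
  have hw : 0 ≤ w := fun i => norm_nonneg _
  have hwB : ‖z‖ • w ≤ w ᵥ* B := fun j =>
    calc ‖z‖ * ‖v j‖ = ‖(v ᵥ* B.map Complex.ofReal) j‖ := by rw [hvB]; simp
      _ ≤ ∑ i, ‖v i‖ * B i j := by
          simp only [vecMul, dotProduct, map_apply]
          refine (norm_sum_le _ _).trans_eq (Finset.sum_congr rfl fun i _ => ?_)
          rw [norm_mul, Complex.norm_real, Real.norm_of_nonneg (by simpa using hB i j)]
  have key : w ≤ (t - ‖z‖) • (w ᵥ* Y) := calc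
      w = w ᵥ* 1 := (vecMul_one w).symm
      _ ≤ w ᵥ* ((t • 1 - B) * Y) := entryLE.vecMul_le_vecMul h hw
      _ = (t • w - w ᵥ* B) ᵥ* Y := by rw [← vecMul_vecMul, vecMul_sub, vecMul_smul, vecMul_one]
      _ ≤ (t • w - ‖z‖ • w) ᵥ* Y := hY.vecMul_mono (sub_le_sub_left hwB _)
      _ = (t - ‖z‖) • (w ᵥ* Y) := by rw [← sub_smul, smul_vecMul]
  obtain ⟨i, hi⟩ : ∃ i, v i ≠ 0 := Function.ne_iff.mp hv
  have hwi : 0 < w i := norm_pos_iff.mpr hi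
  have hwY : 0 ≤ (w ᵥ* Y) i := by simpa using hY.vecMul_mono hw i
  have := key i
  simp only [Pi.smul_apply, smul_eq_mul] at this
  nlinarith

end NonnegativeMatrices

section Companion

variable {m : Type*} [DecidableEq m]

def companion (G H : Matrix m m ℝ) : Matrix (m ⊕ m) (m ⊕ m) ℝ :=
  fromBlocks G 1 H 0

def quadPencil (G H : Matrix m m ℝ) (t : ℝ) : Matrix m m ℝ :=
  t ^ 2 • 1 - t • G - H

lemma companion_nonneg {G H : Matrix m m ℝ} (hG : entryLE 0 G) (hH : entryLE 0 H) :
    entryLE 0 (companion G H) := by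
  rw [companion, ← fromBlocks_zero]
  exact entryLE.fromBlocks hG entryLE_zero_one hH (fun _ _ => le_rfl)

lemma smul_one_sub_companion (G H : Matrix m m ℝ) (t : ℝ) :
    t • (1 : Matrix (m ⊕ m) (m ⊕ m) ℝ) - companion G H =
      fromBlocks (t • 1 - G) (-1) (-H) (t • 1) := by
  rw [companion, ← fromBlocks_one, fromBlocks_smul, sub_eq_add_neg, fromBlocks_neg,
    fromBlocks_add]
  simp [sub_eq_add_neg]

variable [Fintype m]

lemma exists_nonneg_quadPencil_mul_eq_one {G H : Matrix m m ℝ} {t : ℝ} (hG : entryLE 0 G)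
    (hH : entryLE 0 H) (ht : 0 < t) (h : specRad (companion G H) < t) :
    ∃ Z, entryLE 0 Z ∧ quadPencil G H t * Z = 1 := by
  obtain ⟨R, hR0, hR⟩ := exists_nonneg_mul_eq_one_of_specRad_lt (companion_nonneg hG hH) ht h
  rw [smul_one_sub_companion, ← fromBlocks_toBlocks R, fromBlocks_multiply, ← fromBlocks_one,
    fromBlocks_inj] at hR
  obtain ⟨-, h₁₂, -, h₂₂⟩ := hR
  refine ⟨R.toBlocks₁₂, fun i j => hR0 (Sum.inl i) (Sum.inr j), ?_⟩
  rw [neg_one_mul, add_neg_eq_zero] at h₁₂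
  calc quadPencil G H t * R.toBlocks₁₂
      = -H * R.toBlocks₁₂ + t • 1 * ((t • 1 - G) * R.toBlocks₁₂) := by
        simp only [quadPencil, Matrix.sub_mul, Matrix.smul_mul, Matrix.one_mul, Matrix.neg_mul,
          smul_sub, smul_smul]
        module
    _ = 1 := by rw [h₁₂, h₂₂]

lemma specRad_companion_lt {G H U : Matrix m m ℝ} {t : ℝ} (hG : entryLE 0 G)
    (hH : entryLE 0 H) (ht : 0 < t) (hU : entryLE 0 U) (h : entryLE 1 (quadPencil G H t * U)) :
    specRad (companion G H) < t := by
  have ht' : 0 ≤ t⁻¹ := inv_nonneg.2 ht.le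
  refine specRad_lt_of_one_le_mul (Y := fromBlocks (t • U) U (H * U) (t⁻¹ • (1 + H * U)))
    (companion_nonneg hG hH) ?_ ht ?_
  · rw [← fromBlocks_zero]
    exact entryLE.fromBlocks (hU.smul_nonneg ht.le) hU (hH.mul_nonneg hU)
      ((entryLE_zero_one.add_nonneg (hH.mul_nonneg hU)).smul_nonneg ht')
  · have hprod : (t • 1 - companion G H) * fromBlocks (t • U) U (H * U) (t⁻¹ • (1 + H * U)) =
        fromBlocks (quadPencil G H t * U) (t⁻¹ • (quadPencil G H t * U - 1)) 0 1 := by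
      rw [smul_one_sub_companion, fromBlocks_multiply]
      congr 1 <;>
        simp only [quadPencil, Matrix.sub_mul, Matrix.smul_mul, Matrix.mul_smul, Matrix.one_mul,
          Matrix.neg_mul, Matrix.mul_add, Matrix.mul_one, smul_sub, smul_add, smul_smul] <;>
        match_scalars <;> field_simp <;> ring
    rw [hprod, ← fromBlocks_one]
    exact entryLE.fromBlocks h (entryLE.smul_nonneg ht' fun i j => by simpa using h i j)
      (fun _ _ => le_rfl) (fun _ _ => le_rfl)

lemma itMatII_eq_transpose_companion (P R S : Matrix m m ℝ) :
    itMatII P R S = (companion (R * P⁻¹) (-(S * P⁻¹)))ᵀ := by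
  rw [itMatII, companion, fromBlocks_transpose, transpose_one, transpose_zero, transpose_neg]

lemma quadPencil_eq_mul_inv {P : Matrix m m ℝ} (hP : IsUnit P.det) (R S : Matrix m m ℝ) (t : ℝ) :
    quadPencil (R * P⁻¹) (-(S * P⁻¹)) t = (t ^ 2 • P - t • R + S) * P⁻¹ := by
  rw [quadPencil, Matrix.add_mul, Matrix.sub_mul, Matrix.smul_mul, Matrix.smul_mul,
    mul_nonsing_inv _ hP, sub_neg_eq_add]

lemma quadPencil_one_eq_mul_inv {A P R S : Matrix m m ℝ} (hP : IsUnit P.det)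
    (hsplit : A = P - R + S) : quadPencil (R * P⁻¹) (-(S * P⁻¹)) 1 = A * P⁻¹ := by
  rw [quadPencil_eq_mul_inv hP, hsplit, one_pow, one_smul, one_smul]

lemma quadPencil_one_mul_nonneg {G H Z : Matrix m m ℝ} {t : ℝ} (hH : entryLE 0 H)
    (hZ : entryLE 0 Z) (hXZ : quadPencil G H t * Z = 1) (ht0 : 0 < t) (ht1 : t ≤ 1) :
    entryLE 0 (quadPencil G H 1 * Z) := by
  have ht' : 0 ≤ t⁻¹ := inv_nonneg.2 ht0.le
  have hX : quadPencil G H 1 = t⁻¹ • quadPencil G H t + (1 - t) • (1 + t⁻¹ • H) := by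
    simp only [quadPencil]
    match_scalars <;> field_simp <;> ring
  rw [hX, Matrix.add_mul, Matrix.smul_mul, hXZ, Matrix.smul_mul, Matrix.add_mul, Matrix.one_mul,
    Matrix.smul_mul]
  exact (entryLE_zero_one.smul_nonneg ht').add_nonneg
    ((hZ.add_nonneg ((hH.mul_nonneg hZ).smul_nonneg ht')).smul_nonneg (sub_nonneg.2 ht1))

end Companion

theorem specRad_itMatII_lt_of_specRad_itMatII_lt {m : Type*} [Fintype m] [DecidableEq m]
    {A P₁ R₁ S₁ P₂ R₂ S₂ : Matrix m m ℝ} (hAinv : IsUnit A.det) (hmono : entryLE 0 A⁻¹)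
    (hsplit₁ : A = P₁ - R₁ + S₁) (hPinv₁ : IsUnit P₁.det)
    (hRP₁ : entryLE 0 (R₁ * P₁⁻¹)) (hSP₁ : entryLE 0 (-(S₁ * P₁⁻¹)))
    (hsplit₂ : A = P₂ - R₂ + S₂) (hPinv₂ : IsUnit P₂.det)
    (hRP₂ : entryLE 0 (R₂ * P₂⁻¹)) (hSP₂ : entryLE 0 (-(S₂ * P₂⁻¹)))
    (hconv₁ : specRad (itMatII P₁ R₁ S₁) < 1) (hP : entryLE P₁ P₂) (hS : entryLE S₂ S₁)
    {t : ℝ} (ht0 : 0 < t) (ht1 : t ≤ 1) (h₂ : specRad (itMatII P₂ R₂ S₂) < t) :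
    specRad (itMatII P₁ R₁ S₁) < t := by
  rw [itMatII_eq_transpose_companion, specRad_transpose] at hconv₁ h₂ ⊢
  obtain ⟨Z₁, hZ₁, hXZ₁⟩ := exists_nonneg_quadPencil_mul_eq_one hRP₁ hSP₁ one_pos hconv₁
  obtain ⟨Z₂, hZ₂, hXZ₂⟩ := exists_nonneg_quadPencil_mul_eq_one hRP₂ hSP₂ ht0 h₂
  have hN := quadPencil_one_mul_nonneg hSP₂ hZ₂ hXZ₂ ht0 ht1
  rw [quadPencil_one_eq_mul_inv hPinv₂ hsplit₂] at hN
  rw [quadPencil_one_eq_mul_inv hPinv₁ hsplit₁] at hXZ₁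
  have hZ₁eq : Z₁ = P₁ * A⁻¹ := by
    rw [← inv_eq_right_inv hXZ₁, Matrix.mul_inv_rev, nonsing_inv_nonsing_inv _ hPinv₁]
  have hV : entryLE 0 (P₂⁻¹ * Z₂) := by
    simpa [← Matrix.mul_assoc, nonsing_inv_mul _ hAinv] using hmono.mul_nonneg hN
  have hK : entryLE 0 (t • (P₂ - P₁) + (S₁ - S₂)) := fun i j => by
    simpa using add_nonneg (mul_nonneg ht0.le (sub_nonneg.2 (hP i j))) (sub_nonneg.2 (hS i j))
  have hQ : t ^ 2 • P₁ - t • R₁ + S₁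
      = (t ^ 2 • P₂ - t • R₂ + S₂) + (1 - t) • (t • (P₂ - P₁) + (S₁ - S₂)) := by
    rw [show R₁ = P₁ + S₁ - A by rw [hsplit₁]; abel, show R₂ = P₂ + S₂ - A by rw [hsplit₂]; abel]
    module
  have hXU : quadPencil (R₁ * P₁⁻¹) (-(S₁ * P₁⁻¹)) t * (Z₁ * (A * P₂⁻¹ * Z₂))
      = 1 + (1 - t) • ((t • (P₂ - P₁) + (S₁ - S₂)) * (P₂⁻¹ * Z₂)) := by
    calc _ = (t ^ 2 • P₁ - t • R₁ + S₁) * (P₂⁻¹ * Z₂) := by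
          rw [quadPencil_eq_mul_inv hPinv₁, hZ₁eq]
          simp only [Matrix.mul_assoc, nonsing_inv_mul_cancel_left _ _ hPinv₁,
            nonsing_inv_mul_cancel_left _ _ hAinv]
      _ = _ := by
          rw [hQ, Matrix.add_mul, Matrix.smul_mul, ← Matrix.mul_assoc,
            ← quadPencil_eq_mul_inv hPinv₂, hXZ₂]
  refine specRad_companion_lt hRP₁ hSP₁ ht0 (hZ₁.mul_nonneg hN) ?_
  rw [hXU]
  exact entryLE.le_add_of_nonneg_right ((hK.mul_nonneg hV).smul_nonneg (sub_nonneg.2 ht1))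

theorem stmt8_general {n : ℕ} (A P₁ R₁ S₁ P₂ R₂ S₂ : Matrix (Fin n) (Fin n) ℝ)
    (hAinv : IsUnit A.det)
    -- `A` is monotone
    (hmono : entryLE 0 A⁻¹)
    -- two double weak splittings of type II
    (hsplit₁ : A = P₁ - R₁ + S₁) (hPinv₁ : IsUnit P₁.det)
    (hRP₁ : entryLE 0 (R₁ * P₁⁻¹)) (hSP₁ : entryLE 0 (-(S₁ * P₁⁻¹)))
    (hsplit₂ : A = P₂ - R₂ + S₂) (hPinv₂ : IsUnit P₂.det)
    (hRP₂ : entryLE 0 (R₂ * P₂⁻¹)) (hSP₂ : entryLE 0 (-(S₂ * P₂⁻¹)))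
    -- both splittings are convergent
    (hconv₁ : specRad (itMatII P₁ R₁ S₁) < 1)
    (hconv₂ : specRad (itMatII P₂ R₂ S₂) < 1)
    (hP : entryLE P₁ P₂) (hS : entryLE S₂ S₁) :
    specRad (itMatII P₁ R₁ S₁) ≤ specRad (itMatII P₂ R₂ S₂) ∧
      specRad (itMatII P₂ R₂ S₂) < 1 := by
  refine ⟨le_of_forall_gt_imp_ge_of_dense fun t ht => ?_, hconv₂⟩
  rcases le_or_gt t 1 with ht1 | ht1
  · exact (specRad_itMatII_lt_of_specRad_itMatII_lt hAinv hmono hsplit₁ hPinv₁ hRP₁ hSP₁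
      hsplit₂ hPinv₂ hRP₂ hSP₂ hconv₁ hP hS ((specRad_nonneg _).trans_lt ht) ht1 ht).le
  · exact (hconv₁.trans ht1).le

theorem stmt8 {n : ℕ} (A P₁ R₁ S₁ P₂ R₂ S₂ : Matrix (Fin n) (Fin n) ℝ)
    (hAsym : Aᵀ = A) (hAinv : IsUnit A.det)
    -- `A` is monotone
    (hmono : entryLE 0 A⁻¹)
    -- two double weak splittings of type II
    (hsplit₁ : A = P₁ - R₁ + S₁) (hPinv₁ : IsUnit P₁.det)
    (hRP₁ : entryLE 0 (R₁ * P₁⁻¹)) (hSP₁ : entryLE 0 (-(S₁ * P₁⁻¹)))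
    (hsplit₂ : A = P₂ - R₂ + S₂) (hPinv₂ : IsUnit P₂.det)
    (hRP₂ : entryLE 0 (R₂ * P₂⁻¹)) (hSP₂ : entryLE 0 (-(S₂ * P₂⁻¹)))
    -- both splittings are convergent
    (hconv₁ : specRad (itMatII P₁ R₁ S₁) < 1)
    (hconv₂ : specRad (itMatII P₂ R₂ S₂) < 1)
    (hP : entryLE P₁ P₂) (hS : entryLE S₂ S₁) :
    specRad (itMatII P₁ R₁ S₁) ≤ specRad (itMatII P₂ R₂ S₂) ∧
      specRad (itMatII P₂ R₂ S₂) < 1 :=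
  stmt8_general A P₁ R₁ S₁ P₂ R₂ S₂ hAinv hmono hsplit₁ hPinv₁ hRP₁ hSP₁ hsplit₂ hPinv₂ hRP₂ hSP₂
    hconv₁ hconv₂ hP hS
end
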